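/- Let σ₀ be the 2×2 identity matrix and σ₁ the bit-flip (Pauli-X) matrix over ℂ, let O_{x,y} (x,y ∈ {0,1}) be real numbers, and on (ℂ²)^{⊗10} define X₁ = Σ_{x₁,x₂} O_{x₁,x₂} |x₁x₂⟩⟨x₁x₂| ⊗ 1^{⊗8} and, for ι₁,ι₂ ∈ {0,1} with ι = 2ι₁+ι₂, let X_{2.ι} be the operator that projects qubits 1,2 onto |ι₁ι₂⟩, projects qubits 2ι+3, 2ι+4 onto |x,y⟩ with weight O_{x,y} summed over x,y ∈ {0,1}, and acts as the identity on the remaining six qubits. Fix κ₁,…,κ₁₀ ∈ {0,1} and set ρ_fin = (⊗_{j=1}^{10} σ_{κ_j}) |0⟩^{⊗10}⟨0|^{⊗10} (⊗_{j=1}^{10} σ_{κ_j}). Then tr(X₁ ρ_fin) = O_{κ₁,κ₂} and tr((Σ_{ι=0}^{3} X_{2.ι}) ρ_fin) = O_{κ_{2ι*+3}, κ_{2ι*+4}}, where ι* = 2κ₁ + κ₂; that is, with initial state |0⟩^{⊗10} the quantum protocol reproduces exactly the payoffs of the classical twice-repeated 2×2 game in which each player's five operations are her first-stage action and her four contingent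 second-stage actions. -/

import Mathlib

open Matrix

/-- The single-qubit operators: `sig 0` is the identity, `sig 1` the bit-flip. -/
noncomputable def sig : Fin 2 → Matrix (Fin 2) (Fin 2) ℂ
  | 0 => 1
  | 1 => !![0, 1; 1, 0]

/-- Tensor (Kronecker) product of `n` one-qubit operators, realized as a matrix
indexed by `Fin n → Fin 2`. -/
noncomputable def tensorOp {n : ℕ} (A : Fin n → Matrix (Fin 2) (Fin 2) ℂ) :
    Matrix (Fin n → Fin 2) (Fin n → Fin 2) ℂ :=
  Matrix.of fun v w => ∏ j, A j (v j) (w j)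

/-- The computational basis vector `|x⟩` of `(ℂ²)^⊗n`. -/
def basisKet {n : ℕ} (x : Fin n → Fin 2) : (Fin n → Fin 2) → ℂ :=
  fun v => if v = x then 1 else 0

/-- The rank-one operator `|ψ⟩⟨ψ|`. -/
noncomputable def ketbra {n : ℕ} (ψ : (Fin n → Fin 2) → ℂ) :
    Matrix (Fin n → Fin 2) (Fin n → Fin 2) ℂ :=
  Matrix.vecMulVec ψ (star ψ)

/-- `Σ_{x,y} O x y |x y⟩⟨x y|` on qubits `i, j`, tensored with the identity on
all remaining qubits (a diagonal operator). -/
noncomputable def payoffOp {n : ℕ} (i j : Fin n) (O : Matrix (Fin 2) (Fin 2) ℝ) :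
    Matrix (Fin n → Fin 2) (Fin n → Fin 2) ℂ :=
  Matrix.of fun v w => if v = w then (O (v i) (v j) : ℂ) else 0

/-- First bit `ι₁` of `ι = 2ι₁ + ι₂ ∈ {0,1,2,3}`. -/
def bit1 : Fin 4 → Fin 2 := ![0, 0, 1, 1]

/-- Second bit `ι₂` of `ι = 2ι₁ + ι₂ ∈ {0,1,2,3}`. -/
def bit2 : Fin 4 → Fin 2 := ![0, 1, 0, 1]

/-- The index `ι = 2ι₁ + ι₂ ∈ {0,1,2,3}` built from its two bits. -/
def idx (a b : Fin 2) : Fin 4 := ⟨2 * a.val + b.val, by omega⟩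

/-- Zero-based index of qubit `2ι + 3`. -/
def qa : Fin 4 → Fin 10 := ![2, 4, 6, 8]

/-- Zero-based index of qubit `2ι + 4`. -/
def qb : Fin 4 → Fin 10 := ![3, 5, 7, 9]

/-- The measurement operator `M_ι = |ι₁ι₂⟩⟨ι₁ι₂| ⊗ 1^{⊗8}` on `(ℂ²)^⊗10`. -/
noncomputable def Mop (ι : Fin 4) : Matrix (Fin 10 → Fin 2) (Fin 10 → Fin 2) ℂ :=
  Matrix.of fun v w => if v = w ∧ v 0 = bit1 ι ∧ v 1 = bit2 ι then 1 else 0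

/-- The operator `X_{2.ι}` on `(ℂ²)^⊗10`: projects qubits 1,2 onto `|ι₁ι₂⟩`,
projects qubits `2ι+3, 2ι+4` onto `|x,y⟩` with weight `O x y` summed over
`x, y ∈ {0,1}`, and acts as the identity on the remaining six qubits. -/
noncomputable def X2op (O : Matrix (Fin 2) (Fin 2) ℝ) (ι : Fin 4) :
    Matrix (Fin 10 → Fin 2) (Fin 10 → Fin 2) ℂ :=
  Matrix.of fun v w =>
    if v = w ∧ v 0 = bit1 ι ∧ v 1 = bit2 ι then (O (v (qa ι)) (v (qb ι)) : ℂ) else 0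

/-!
The bit flips `⊗ σ_{κ_j}` permute the computational basis, sending `|x⟩` to `|x + κ⟩`, so
`ρ_fin = |κ⟩⟨κ|` and the expectation of an operator in `ρ_fin` is its diagonal entry at `κ`.
All payoff operators are diagonal, and at `κ` only the summand `X_{2.ι*}` survives.
-/

lemma sig_apply (k a b : Fin 2) : sig k a b = if a = b + k then 1 else 0 := by
  fin_cases k <;> fin_cases a <;> fin_cases b <;> simp [sig]

lemma conjTranspose_sig (k : Fin 2) : (sig k)ᴴ = sig k := by
  ext a b
  fin_cases k <;> fin_cases a <;> fin_cases b <;> simp [sig]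

lemma conjTranspose_tensorOp {n : ℕ} (A : Fin n → Matrix (Fin 2) (Fin 2) ℂ) :
    (tensorOp A)ᴴ = tensorOp fun j => (A j)ᴴ := by
  ext v w
  simp [tensorOp, star_prod]

lemma tensorOp_sig_apply {n : ℕ} (κ v w : Fin n → Fin 2) :
    tensorOp (fun j => sig (κ j)) v w = if v = w + κ then 1 else 0 := by
  simp only [tensorOp, Matrix.of_apply, sig_apply, Finset.prod_boole]
  simp [funext_iff]

lemma basisKet_eq_single {n : ℕ} (x : Fin n → Fin 2) : basisKet x = Pi.single x 1 := by
  ext v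
  simp [basisKet, Pi.single_apply]

lemma mul_ketbra_mul_conjTranspose {n : ℕ} (U : Matrix (Fin n → Fin 2) (Fin n → Fin 2) ℂ)
    (ψ : (Fin n → Fin 2) → ℂ) : U * ketbra ψ * Uᴴ = ketbra (U *ᵥ ψ) := by
  rw [ketbra, ketbra, mul_vecMulVec, vecMulVec_mul, star_mulVec]

lemma tensorOp_sig_mulVec_basisKet {n : ℕ} (κ x : Fin n → Fin 2) :
    tensorOp (fun j => sig (κ j)) *ᵥ basisKet x = basisKet (x + κ) := by
  ext v
  simp [basisKet_eq_single, tensorOp_sig_apply, Pi.single_apply]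

lemma tensorOp_sig_conj_ketbra_basisKet {n : ℕ} (κ x : Fin n → Fin 2) :
    tensorOp (fun j => sig (κ j)) * ketbra (basisKet x) * tensorOp (fun j => sig (κ j)) =
      ketbra (basisKet (x + κ)) := by
  have hU : (tensorOp fun j => sig (κ j))ᴴ = tensorOp fun j => sig (κ j) := by
    simp only [conjTranspose_tensorOp, conjTranspose_sig]
  nth_rewrite 2 [← hU]
  rw [mul_ketbra_mul_conjTranspose, tensorOp_sig_mulVec_basisKet]

lemma trace_mul_ketbra_basisKet {n : ℕ} (X : Matrix (Fin n → Fin 2) (Fin n → Fin 2) ℂ)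
    (x : Fin n → Fin 2) : (X * ketbra (basisKet x)).trace = X x x := by
  simp [ketbra, mul_vecMulVec, basisKet_eq_single]

lemma payoffOp_apply_self {n : ℕ} (i j : Fin n) (O : Matrix (Fin 2) (Fin 2) ℝ)
    (v : Fin n → Fin 2) : payoffOp i j O v v = O (v i) (v j) := by
  simp [payoffOp]

lemma eq_bit1_and_eq_bit2_iff (a b : Fin 2) (ι : Fin 4) :
    a = bit1 ι ∧ b = bit2 ι ↔ idx a b = ι := by
  revert a b ι
  decide

lemma sum_X2op_apply_self (O : Matrix (Fin 2) (Fin 2) ℝ) (v : Fin 10 → Fin 2) :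
    (∑ ι : Fin 4, X2op O ι) v v =
      O (v (qa (idx (v 0) (v 1)))) (v (qb (idx (v 0) (v 1)))) := by
  simp [Matrix.sum_apply, X2op, eq_bit1_and_eq_bit2_iff]

/-- with initial state `|0⟩^{⊗10}` the quantum protocol reproduces
exactly the payoffs of the classical twice-repeated `2×2` game: the first-stage
outcome is `O(κ₁,κ₂)` and the second-stage outcome is `O(κ_{2ι*+3}, κ_{2ι*+4})`
where `ι* = 2κ₁ + κ₂`. -/
theorem stmt_16 (O : Matrix (Fin 2) (Fin 2) ℝ) (κ : Fin 10 → Fin 2) :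
    let Ufull := tensorOp fun j => sig (κ j)
    let ρfin := Ufull * ketbra (basisKet fun _ => 0) * Ufull
    let ι' : Fin 4 := idx (κ 0) (κ 1)
    (payoffOp 0 1 O * ρfin).trace = (O (κ 0) (κ 1) : ℂ)
      ∧ ((∑ ι : Fin 4, X2op O ι) * ρfin).trace
        = (O (κ (qa ι')) (κ (qb ι')) : ℂ) := by
  intro Ufull ρfin ι'
  have hρ : ρfin = ketbra (basisKet κ) := by
    rw [← zero_add κ]
    exact tensorOp_sig_conj_ketbra_basisKet κ 0
  rw [hρ, trace_mul_ketbra_basisKet, trace_mul_ketbra_basisKet]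
  exact ⟨payoffOp_apply_self 0 1 O κ, sum_X2op_apply_self O κ⟩
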